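/- arXiv:1106.1208 — 5 statements merged into one kernel-verified Lean document; each statement's English description precedes it below -/
import Mathlib

section
/- Let x_1, ..., x_N ≥ 0 be the components of a W-class state, fix a party k, and consider a two-outcome measurement by party k with operators diag(√a_λ, √c_λ), λ = 1,2, where a_1 + a_2 = 1 and c_1 + c_2 ≤ 1. The post-measurement components are x_{λ,k} = (c_λ/p_λ)x_k and x_{λ,j} = (a_λ/p_λ)x_j for j ≠ k, occurring with probability p_λ = a_λ(1 - x_k) + c_λ x_k (assuming p_λ > 0). Then ∑_λ p_λ x_{λ,k} ≤ x_k and ∑_λ p_λ x_{λ,j} = x_j for all j ≠ k. -/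
theorem outcome_average_eq {K : Type*} [Field K] {p₁ p₂ : K} (w₁ w₂ y : K)
    (hp₁ : p₁ ≠ 0) (hp₂ : p₂ ≠ 0) :
    p₁ * (w₁ / p₁ * y) + p₂ * (w₂ / p₂ * y) = (w₁ + w₂) * y := by
  rw [← mul_assoc, ← mul_assoc, mul_div_cancel₀ _ hp₁, mul_div_cancel₀ _ hp₂, add_mul]

theorem stmt5_general (x : ℕ → ℝ) (hx : ∀ i, 0 ≤ x i) (k : ℕ)
    (a₁ a₂ c₁ c₂ : ℝ)
    (hsa : a₁ + a₂ = 1) (hsc : c₁ + c₂ ≤ 1)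
    (p₁ p₂ : ℝ)
    (hp₁0 : 0 < p₁) (hp₂0 : 0 < p₂) :
    p₁ * (c₁ / p₁ * x k) + p₂ * (c₂ / p₂ * x k) ≤ x k ∧
    ∀ j, j ≠ k → p₁ * (a₁ / p₁ * x j) + p₂ * (a₂ / p₂ * x j) = x j := by
  refine ⟨?_, fun j _ => ?_⟩
  · rw [outcome_average_eq _ _ _ hp₁0.ne' hp₂0.ne']
    exact mul_le_of_le_one_left (hx k) hsc
  · rw [outcome_average_eq _ _ _ hp₁0.ne' hp₂0.ne', hsa, one_mul]

/-- Kintaş–Turgut monotonicity of W-state components under a two-outcome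
local measurement with diagonal Kraus operators `diag(√aλ, √cλ)` by party `k`. -/
theorem stmt5 (x : ℕ → ℝ) (hx : ∀ i, 0 ≤ x i) (k : ℕ)
    (a₁ a₂ c₁ c₂ : ℝ) (ha₁ : 0 ≤ a₁) (ha₂ : 0 ≤ a₂) (hc₁ : 0 ≤ c₁) (hc₂ : 0 ≤ c₂)
    (hsa : a₁ + a₂ = 1) (hsc : c₁ + c₂ ≤ 1)
    (p₁ p₂ : ℝ)
    (hp₁ : p₁ = a₁ * (1 - x k) + c₁ * x k) (hp₂ : p₂ = a₂ * (1 - x k) + c₂ * x k)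
    (hp₁0 : 0 < p₁) (hp₂0 : 0 < p₂) :
    p₁ * (c₁ / p₁ * x k) + p₂ * (c₂ / p₂ * x k) ≤ x k ∧
    ∀ j, j ≠ k → p₁ * (a₁ / p₁ * x j) + p₂ * (a₂ / p₂ * x j) = x j :=
  stmt5_general x hx k a₁ a₂ c₁ c₂ hsa hsc p₁ p₂ hp₁0 hp₂0
end

section
/- For binary strings x, y ∈ {0,1}^n, let |x̃⟩ denote the 2n-qubit state ⊗_{i=1}^n |x̃_i⟩ where |x̃_i⟩ = |00⟩ if x_i = 0 and |x̃_i⟩ = (|01⟩+|10⟩)/√2 if x_i = 1, and let A be an operator acting on the n 'first' qubits (Bob's qubits). If ⟨x̃|(A⊗I)|ỹ⟩ = 0 for all x ≠ y ∈ {0,1}^n, then ⟨x|A|y⟩ = 0 for all x ≠ y ∈ {0,1}^n. -/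
/-
Coordinatewise, `⟨x̃|(A ⊗ I)|ỹ⟩ = c · ∑_{b ∈ S} ⟨x + b|A|y + b⟩` with `c ≠ 0`, where `b` ranges over
the bit strings supported on the positions `i` with `xᵢ = yᵢ = 1`. Argue by strong induction on the
number of such positions: for `b ≠ 0` the pair `(x + b, y + b)` has strictly fewer of them and still
`x + b ≠ y + b`, so those terms vanish and only `c · ⟨x|A|y⟩` is left.
-/

open Matrix

/-- The two-qubit state assigned to a bit: `|00⟩` for `0`, `(|01⟩+|10⟩)/√2` for `1`. -/
noncomputable def pairState (b : Fin 2) : Fin 2 × Fin 2 → ℂ :=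
  if b = 0 then (fun p => if p = (0, 0) then 1 else 0)
  else (fun p => if p.1 = p.2 then 0 else ((1 / Real.sqrt 2 : ℝ) : ℂ))

/-- The `2n`-qubit state `|x̃⟩ = ⊗ᵢ |x̃ᵢ⟩`. -/
noncomputable def tilde (n : ℕ) (x : Fin n → Fin 2) : (Fin n → Fin 2 × Fin 2) → ℂ :=
  fun f => ∏ i, pairState (x i) (f i)

/-- `A ⊗ I`, with `A` acting on the first qubit of each of the `n` pairs. -/
def AI (n : ℕ) (A : Matrix (Fin n → Fin 2) (Fin n → Fin 2) ℂ) :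
    Matrix (Fin n → Fin 2 × Fin 2) (Fin n → Fin 2 × Fin 2) ℂ :=
  fun f g => A (fun i => (f i).1) (fun i => (g i).1) *
    (if (fun i => (f i).2) = (fun i => (g i).2) then 1 else 0)

open Finset

theorem sum_arrow_prod {ι α β M : Type*} [Fintype ι] [DecidableEq ι] [Fintype α] [Fintype β]
    [AddCommMonoid M] (F : (ι → α × β) → M) :
    ∑ f, F f = ∑ u : ι → α, ∑ s : ι → β, F fun i => (u i, s i) := by
  rw [← (Equiv.arrowProdEquivProdArrow ι (fun _ => α) (fun _ => β)).symm.sum_comp F,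
    Fintype.sum_prod_type]
  rfl

theorem AI_mulVec_apply {n : ℕ} (A : Matrix (Fin n → Fin 2) (Fin n → Fin 2) ℂ)
    (g : (Fin n → Fin 2 × Fin 2) → ℂ) (u s : Fin n → Fin 2) :
    (AI n A *ᵥ g) (fun i => (u i, s i)) = ∑ v, A u v * g fun i => (v i, s i) := by
  rw [mulVec, dotProduct, sum_arrow_prod]
  -- `simp` does not eta-reduce the `fun i => s i` that `AI` produces
  change ∑ v, ∑ t, A u v * (if s = t then 1 else 0) * g (fun i => (v i, t i)) = _
  simp

theorem dotProduct_AI_mulVec_prod {n : ℕ} (A : Matrix (Fin n → Fin 2) (Fin n → Fin 2) ℂ)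
    (φ ψ : Fin n → Fin 2 × Fin 2 → ℂ) :
    (fun f => ∏ i, φ i (f i)) ⬝ᵥ (AI n A *ᵥ fun g => ∏ i, ψ i (g i)) =
      ∑ u, ∑ v, A u v * ∏ i, ∑ s, φ i (u i, s) * ψ i (v i, s) := by
  rw [dotProduct, sum_arrow_prod]
  simp only [AI_mulVec_apply, Fintype.prod_sum, mul_sum]
  refine sum_congr rfl fun u _ => ?_
  rw [sum_comm]
  refine sum_congr rfl fun v _ => sum_congr rfl fun s _ => ?_
  rw [prod_mul_distrib]
  ring

noncomputable def pairOverlap (a b c d : Fin 2) : ℂ :=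
  ∑ s, pairState a (c, s) * pairState b (d, s)

theorem star_tilde (n : ℕ) (x : Fin n → Fin 2) : star (tilde n x) = tilde n x := by
  funext f
  simp only [Pi.star_apply, tilde, star_prod]
  refine prod_congr rfl fun i _ => ?_
  unfold pairState
  split_ifs <;> simp [apply_ite (star : ℂ → ℂ)]

theorem inner_tilde_AI_tilde {n : ℕ} (A : Matrix (Fin n → Fin 2) (Fin n → Fin 2) ℂ)
    (x y : Fin n → Fin 2) :
    star (tilde n x) ⬝ᵥ AI n A *ᵥ tilde n y =
      ∑ u, ∑ v, A u v * ∏ i, pairOverlap (x i) (y i) (u i) (v i) := by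
  rw [star_tilde]
  exact dotProduct_AI_mulVec_prod A _ _

/-- `(c, d) = (a + β, b + β)` with `β = 0` unless `a = b = 1`: the coordinatewise form of the
index set `S`, and the support of `pairOverlap a b`. -/
abbrev PairCompatible (a b c d : Fin 2) : Prop :=
  if a = 1 ∧ b = 1 then c = d else c = a ∧ d = b

theorem pairOverlap_ne_zero_iff (a b c d : Fin 2) :
    pairOverlap a b c d ≠ 0 ↔ PairCompatible a b c d := by
  have hsqrt : (Real.sqrt 2 : ℂ) ≠ 0 := by exact_mod_cast (by positivity : Real.sqrt 2 ≠ 0)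
  fin_cases a <;> fin_cases b <;> fin_cases c <;> fin_cases d <;>
    simp [pairOverlap, pairState, PairCompatible, Fin.sum_univ_two, hsqrt]

section Combinatorics

variable {ι : Type*}

def commonOnes [Fintype ι] (x y : ι → Fin 2) : Finset ι :=
  univ.filter fun i => x i = 1 ∧ y i = 1

theorem mem_commonOnes [Fintype ι] {x y : ι → Fin 2} {i : ι} :
    i ∈ commonOnes x y ↔ x i = 1 ∧ y i = 1 := by
  simp [commonOnes]

theorem ne_of_pairCompatible {x y u v : ι → Fin 2}
    (hc : ∀ i, PairCompatible (x i) (y i) (u i) (v i)) (hxy : x ≠ y) : u ≠ v := by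
  obtain ⟨i, hi⟩ := Function.ne_iff.1 hxy
  have key : ∀ a b c d : Fin 2, PairCompatible a b c d → a ≠ b → c ≠ d := by decide
  exact Function.ne_iff.2 ⟨i, key _ _ _ _ (hc i) hi⟩

theorem commonOnes_ssubset [Fintype ι] {x y u v : ι → Fin 2}
    (hc : ∀ i, PairCompatible (x i) (y i) (u i) (v i)) (huv : (u, v) ≠ (x, y)) :
    commonOnes u v ⊂ commonOnes x y := by
  have mono : ∀ a b c d : Fin 2, PairCompatible a b c d → c = 1 ∧ d = 1 → a = 1 ∧ b = 1 := by
    decide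
  have drop : ∀ a b c d : Fin 2, PairCompatible a b c d → ¬(c = a ∧ d = b) →
      (a = 1 ∧ b = 1) ∧ c = 0 := by
    decide
  obtain ⟨i, hi⟩ : ∃ i, ¬(u i = x i ∧ v i = y i) := by
    by_contra! h
    exact huv (Prod.ext (funext fun i => (h i).1) (funext fun i => (h i).2))
  refine (ssubset_iff_of_subset fun j hj => ?_).2 ⟨i, ?_, ?_⟩
  · exact mem_commonOnes.2 (mono _ _ _ _ (hc j) (mem_commonOnes.1 hj))
  · exact mem_commonOnes.2 (drop _ _ _ _ (hc i) hi).1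
  · simp [mem_commonOnes, (drop _ _ _ _ (hc i) hi).2]

theorem eq_zero_of_sum_mul_prod_pairOverlap [Fintype ι] [DecidableEq ι]
    (A : Matrix (ι → Fin 2) (ι → Fin 2) ℂ)
    (h : ∀ x y : ι → Fin 2, x ≠ y →
      ∑ u, ∑ v, A u v * ∏ i, pairOverlap (x i) (y i) (u i) (v i) = 0)
    (x y : ι → Fin 2) (hxy : x ≠ y) : A x y = 0 := by
  induction hN : #(commonOnes x y) using Nat.strong_induction_on generalizing x y with
  | _ N ih =>
  have hterm : ∀ p : (ι → Fin 2) × (ι → Fin 2), p ≠ (x, y) →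
      A p.1 p.2 * ∏ i, pairOverlap (x i) (y i) (p.1 i) (p.2 i) = 0 := by
    rintro ⟨u, v⟩ huv
    by_cases hW : ∏ i, pairOverlap (x i) (y i) (u i) (v i) = 0
    · rw [hW, mul_zero]
    have hc i : PairCompatible (x i) (y i) (u i) (v i) :=
      (pairOverlap_ne_zero_iff _ _ _ _).1 (prod_ne_zero_iff.1 hW i (mem_univ i))
    rw [ih _ (hN ▸ card_lt_card (commonOnes_ssubset hc huv)) u v (ne_of_pairCompatible hc hxy) rfl,
      zero_mul]
  have compatible_self : ∀ a b : Fin 2, PairCompatible a b a b := by decide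
  have hdiag : ∏ i, pairOverlap (x i) (y i) (x i) (y i) ≠ 0 :=
    prod_ne_zero_iff.2 fun i _ => (pairOverlap_ne_zero_iff _ _ _ _).2 (compatible_self _ _)
  have hsum := h x y hxy
  rw [← Fintype.sum_prod_type', Fintype.sum_eq_single (x, y) hterm] at hsum
  exact (mul_eq_zero.1 hsum).resolve_right hdiag

end Combinatorics

/-- if `⟨x̃|(A⊗I)|ỹ⟩ = 0` for all `x ≠ y`, then `⟨x|A|y⟩ = 0` for all `x ≠ y`. -/
theorem stmt11 (n : ℕ) (A : Matrix (Fin n → Fin 2) (Fin n → Fin 2) ℂ)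
    (h : ∀ x y : Fin n → Fin 2, x ≠ y →
      star (tilde n x) ⬝ᵥ (AI n A).mulVec (tilde n y) = 0) :
    ∀ x y : Fin n → Fin 2, x ≠ y → A x y = 0 :=
  eq_zero_of_sum_mul_prod_pairOverlap A fun x y hxy => inner_tilde_AI_tilde A x y ▸ h x y hxy
end

section
/- With the notation of the previous context, if ⟨x̃|(A⊗I)|x̃⟩ = k for all x ∈ {0,1}^n, then ⟨x|A|x⟩ = k for all x ∈ {0,1}^n. -/
open Matrix

/-!
The state `|x̃⟩` is supported on the basis vectors `(y, x - y)` with `y ≤ x` coordinatewise, all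
with the same amplitude, of squared modulus `1 / #{y | y ≤ x}`; distinct `y` give distinct second
registers, on which `A ⊗ I` acts diagonally. Hence `⟨x̃|(A ⊗ I)|x̃⟩` is the average of `A y y` over
the down-set of `x`, and if all these averages equal `k`, well-founded induction on `x` gives
`A x x = k`.
-/

open Finset

theorem eq_of_forall_inv_card_Iic_mul_sum_eq {α K : Type*} [PartialOrder α]
    [LocallyFiniteOrderBot α] [WellFoundedLT α] [Field K] [CharZero K] {g : α → K} {k : K}
    (h : ∀ x, (#(Iic x) : K)⁻¹ * ∑ y ∈ Iic x, g y = k) (x : α) : g x = k := by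
  induction x using WellFoundedLT.induction with
  | _ x ih =>
    have hsum := h x
    rw [Iic_eq_cons_Iio, sum_cons, card_cons, sum_congr rfl fun y hy => ih y (mem_Iio.1 hy),
      sum_const, nsmul_eq_mul] at hsum
    have hcard : ((#(Iio x) + 1 : ℕ) : K) ≠ 0 := Nat.cast_ne_zero.2 (Nat.succ_ne_zero _)
    field_simp at hsum
    push_cast at hsum
    linear_combination hsum

theorem star_dotProduct_mulVec_of_eq_ite {ι κ R : Type*} [Fintype ι] [DecidableEq ι]
    [CommSemiring R] [StarRing R] (M : Matrix ι ι R) {s : Finset κ} {e : κ → ι}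
    (he : Set.InjOn e s) (c : R) {v : ι → R} (hv : ∀ i, v i = if i ∈ s.image e then c else 0) :
    star v ⬝ᵥ M *ᵥ v = star c * c * ∑ a ∈ s, ∑ b ∈ s, M (e a) (e b) := by
  have sum_v : ∀ w : ι → R, ∑ i, w i * v i = ∑ a ∈ s, w (e a) * c := fun w => by
    simp only [hv, mul_ite, mul_zero, sum_ite_mem, univ_inter, sum_image he]
  have sum_star_v : ∀ w : ι → R, ∑ i, star (v i) * w i = ∑ a ∈ s, star c * w (e a) := fun w => by
    simp only [hv, apply_ite star, star_zero, ite_mul, zero_mul, sum_ite_mem, univ_inter,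
      sum_image he]
  simp only [dotProduct, mulVec, Pi.star_apply, sum_v]
  rw [sum_star_v, mul_sum]
  exact sum_congr rfl fun _ _ => by rw [mul_sum, mul_sum]; exact sum_congr rfl fun _ _ => by ring

theorem pairState_eq_ite (b : Fin 2) (p : Fin 2 × Fin 2) :
    pairState b p = if p.1 ≤ b ∧ p.2 = b - p.1 then ((√(#(Iic b) : ℝ))⁻¹ : ℂ) else 0 := by
  fin_cases b <;> obtain ⟨p₁, p₂⟩ := p <;> fin_cases p₁ <;> fin_cases p₂ <;>
    simp [pairState, Fin.card_Iic]

theorem tilde_eq_ite {n : ℕ} (x : Fin n → Fin 2) (f : Fin n → Fin 2 × Fin 2) :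
    tilde n x f = if f ∈ (Iic x).image (fun y i => (y i, x i - y i))
      then ∏ i, ((√(#(Iic (x i)) : ℝ))⁻¹ : ℂ) else 0 := by
  simp only [tilde, pairState_eq_ite, prod_ite_zero]
  congr 1
  simp only [mem_univ, forall_const, mem_image, mem_Iic, funext_iff, Prod.ext_iff, eq_iff_iff]
  constructor
  · intro hf
    exact ⟨fun i => (f i).1, fun i => (hf i).1, fun i => ⟨rfl, (hf i).2.symm⟩⟩
  · rintro ⟨y, hy, hf⟩ i
    rw [← (hf i).1, ← (hf i).2]
    exact ⟨hy i, rfl⟩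

theorem star_tilde_dotProduct_AI_mulVec {n : ℕ} (A : Matrix (Fin n → Fin 2) (Fin n → Fin 2) ℂ)
    (x : Fin n → Fin 2) :
    star (tilde n x) ⬝ᵥ AI n A *ᵥ tilde n x = (#(Iic x) : ℂ)⁻¹ * ∑ y ∈ Iic x, A y y := by
  have inj : Set.InjOn (fun (y : Fin n → Fin 2) i => (y i, x i - y i)) (Iic x) :=
    fun y _ y' _ h => funext fun i => congrArg Prod.fst (congrFun h i)
  rw [star_dotProduct_mulVec_of_eq_ite _ inj _ (tilde_eq_ite x)]
  congr 1
  · rw [star_prod, ← prod_mul_distrib, Pi.card_Iic, Nat.cast_prod, ← prod_inv_distrib]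
    refine prod_congr rfl fun i _ => ?_
    rw [← Complex.ofReal_inv, Complex.star_def, Complex.conj_ofReal, ← Complex.ofReal_mul,
      ← mul_inv, Real.mul_self_sqrt (Nat.cast_nonneg _), Complex.ofReal_inv, Complex.ofReal_natCast]
  · refine sum_congr rfl fun y hy => ?_
    have sub_inj : ∀ b : Fin n → Fin 2, ((fun i => x i - y i) = fun i => x i - b i) ↔ y = b :=
      fun b => by simp only [funext_iff, sub_right_inj]
    simp only [AI, mul_one, mul_zero, sub_inj, mul_ite, sum_ite_eq, if_pos hy]

/-- if `⟨x̃|(A⊗I)|x̃⟩ = k` for all `x`, then `⟨x|A|x⟩ = k` for all `x`. -/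
theorem stmt12 (n : ℕ) (A : Matrix (Fin n → Fin 2) (Fin n → Fin 2) ℂ) (k : ℂ)
    (h : ∀ x : Fin n → Fin 2,
      star (tilde n x) ⬝ᵥ (AI n A).mulVec (tilde n x) = k) :
    ∀ x : Fin n → Fin 2, A x x = k :=
  eq_of_forall_inv_card_Iic_mul_sum_eq (g := fun y => A y y) fun x =>
    (star_tilde_dotProduct_AI_mulVec A x).symm.trans (h x)
end

section
/- Let N ≥ 3 and x_1 ≥ x_2 ≥ ... ≥ x_N > 0. Define g(x_2,...,x_N) = x_1·(1 - ∏_{i=2}^N(1 - x_i/x_1)) - ∑_{i=2}^N x_i·∏_{j=2, j≠i}^N(1 - x_j/x_1). Then the partial derivative of g with respect to x_k equals ∑_{i=2, i≠k}^N (x_i/x_1)·∏_{j=2, j≠i,k}^N(1 - x_j/x_1), which is nonnegative, and g vanishes when x_2 = ... = x_N = 0; hence g ≥ 0. -/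
/-!
Put `cᵢ = xᵢ / x₁ ∈ [0, 1]`. Then `g = x₁ · (1 - ∏ (1 - cᵢ) - ∑ cᵢ ∏_{j ≠ i} (1 - cⱼ))` is `x₁` times
the probability that at least two of independent events of probabilities `cᵢ` occur (at least one,
minus exactly one), hence `g ≥ 0`.
In each single variable `xₖ` the function `g` is affine, with slope `∑_{i ≠ k} cᵢ ∏_{j ≠ i, k} (1 - cⱼ)`.
-/

open Finset Function

variable {ι : Type*} [DecidableEq ι]

theorem sum_mul_prod_erase_one_sub_le (S : Finset ι) (c : ι → ℝ) (hc₀ : ∀ i ∈ S, 0 ≤ c i)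
    (hc₁ : ∀ i ∈ S, c i ≤ 1) :
    ∑ i ∈ S, c i * ∏ j ∈ S.erase i, (1 - c j) ≤ 1 - ∏ i ∈ S, (1 - c i) := by
  induction S using Finset.induction_on with
  | empty => simp
  | insert a S ha ih =>
    have hc₀' : ∀ i ∈ S, 0 ≤ c i := fun i hi => hc₀ i (mem_insert_of_mem hi)
    have hc₁' : ∀ i ∈ S, c i ≤ 1 := fun i hi => hc₁ i (mem_insert_of_mem hi)
    have ha₀ := hc₀ a (mem_insert_self a S)
    have ha₁ := hc₁ a (mem_insert_self a S)
    have hP : ∏ i ∈ S, (1 - c i) ≤ 1 :=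
      prod_le_one (fun i hi => by linarith [hc₁' i hi]) (fun i hi => by linarith [hc₀' i hi])
    have hsplit : ∑ i ∈ S, c i * ∏ j ∈ (insert a S).erase i, (1 - c j)
        = (1 - c a) * ∑ i ∈ S, c i * ∏ j ∈ S.erase i, (1 - c j) := by
      rw [mul_sum]
      refine sum_congr rfl fun i hi => ?_
      have hai : a ≠ i := fun h => ha (h ▸ hi)
      rw [erase_insert_of_ne hai, prod_insert fun h => ha (mem_of_mem_erase h)]
      ring
    rw [sum_insert ha, prod_insert ha, erase_insert ha, hsplit]
    nlinarith [mul_le_mul_of_nonneg_left (ih hc₀' hc₁') (by linarith : (0 : ℝ) ≤ 1 - c a)]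

theorem prod_comp_update_of_notMem (T : Finset ι) (f : ℝ → ℝ) (y : ι → ℝ) {k : ι} (hk : k ∉ T)
    (t : ℝ) : ∏ j ∈ T, f (update y k t j) = ∏ j ∈ T, f (y j) :=
  prod_congr rfl fun j hj => by rw [update_of_ne (ne_of_mem_of_not_mem hj hk)]

theorem prod_one_sub_update_div (S : Finset ι) (a : ℝ) (y : ι → ℝ) {k : ι} (hk : k ∈ S)
    (t : ℝ) :
    ∏ i ∈ S, (1 - update y k t i / a) = (1 - t / a) * ∏ i ∈ S.erase k, (1 - y i / a) := by
  rw [← mul_prod_erase S _ hk, update_self,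
    prod_comp_update_of_notMem _ (fun s => 1 - s / a) y (notMem_erase k S)]

noncomputable def atLeastTwoMass (S : Finset ι) (a : ℝ) (y : ι → ℝ) : ℝ :=
  a * (1 - ∏ i ∈ S, (1 - y i / a)) - ∑ i ∈ S, y i * ∏ j ∈ S.erase i, (1 - y j / a)

noncomputable def atLeastTwoMassSlope (S : Finset ι) (a : ℝ) (y : ι → ℝ) (k : ι) : ℝ :=
  ∑ i ∈ S.erase k, (y i / a) * ∏ j ∈ (S.erase i).erase k, (1 - y j / a)

theorem atLeastTwoMass_update (S : Finset ι) {a : ℝ} (ha : a ≠ 0) (y : ι → ℝ) {k : ι}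
    (hk : k ∈ S) (t : ℝ) :
    atLeastTwoMass S a (update y k t)
      = a * (1 - ∏ i ∈ S.erase k, (1 - y i / a))
          - ∑ i ∈ S.erase k, y i * ∏ j ∈ (S.erase i).erase k, (1 - y j / a)
          + t * atLeastTwoMassSlope S a y k := by
  set P := ∏ i ∈ S.erase k, (1 - y i / a)
  set M := ∑ i ∈ S.erase k, y i * ∏ j ∈ (S.erase i).erase k, (1 - y j / a)
  have hslope : atLeastTwoMassSlope S a y k = M / a := by
    rw [atLeastTwoMassSlope, sum_div]
    exact sum_congr rfl fun i _ => by ring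
  have hsum : ∑ i ∈ S, update y k t i * ∏ j ∈ S.erase i, (1 - update y k t j / a)
      = t * P + (1 - t / a) * M := by
    rw [← add_sum_erase S _ hk, update_self,
      prod_comp_update_of_notMem _ (fun s => 1 - s / a) y (notMem_erase k S), mul_sum]
    congr 1
    refine sum_congr rfl fun i hi => ?_
    have hik : i ≠ k := ne_of_mem_erase hi
    rw [update_of_ne hik, prod_one_sub_update_div _ a y (mem_erase.2 ⟨hik.symm, hk⟩)]
    ring
  have hprod : ∏ i ∈ S, (1 - update y k t i / a) = (1 - t / a) * P :=
    prod_one_sub_update_div S a y hk t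
  rw [atLeastTwoMass, hprod, hsum, hslope]
  field_simp
  ring

theorem hasDerivAt_atLeastTwoMass_update (S : Finset ι) {a : ℝ} (ha : a ≠ 0) (y : ι → ℝ)
    {k : ι} (hk : k ∈ S) (t : ℝ) :
    HasDerivAt (fun t => atLeastTwoMass S a (update y k t)) (atLeastTwoMassSlope S a y k) t := by
  simp_rw [atLeastTwoMass_update S ha y hk]
  exact (hasDerivAt_mul_const _).const_add _

theorem atLeastTwoMassSlope_nonneg (S : Finset ι) {a : ℝ} (y : ι → ℝ)
    (h₀ : ∀ i ∈ S, 0 ≤ y i / a) (h₁ : ∀ i ∈ S, y i / a ≤ 1) (k : ι) :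
    0 ≤ atLeastTwoMassSlope S a y k :=
  sum_nonneg fun i hi => mul_nonneg (h₀ i (mem_of_mem_erase hi)) <|
    prod_nonneg fun j hj => sub_nonneg.2 (h₁ j (mem_of_mem_erase (mem_of_mem_erase hj)))

theorem atLeastTwoMass_nonneg (S : Finset ι) {a : ℝ} (y : ι → ℝ)
    (h₀ : ∀ i ∈ S, 0 ≤ y i / a) (h₁ : ∀ i ∈ S, y i / a ≤ 1) (ha : 0 < a) :
    0 ≤ atLeastTwoMass S a y := by
  have hsum : ∑ i ∈ S, y i * ∏ j ∈ S.erase i, (1 - y j / a)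
      = a * ∑ i ∈ S, y i / a * ∏ j ∈ S.erase i, (1 - y j / a) := by
    rw [mul_sum]
    exact sum_congr rfl fun i _ => by field_simp
  rw [atLeastTwoMass, hsum, ← mul_sub]
  exact mul_nonneg ha.le <| sub_nonneg.2 <| sum_mul_prod_erase_one_sub_le S _ h₀ h₁

theorem atLeastTwoMass_eq_zero (S : Finset ι) (a : ℝ) {y : ι → ℝ} (hy : ∀ i ∈ S, y i = 0) :
    atLeastTwoMass S a y = 0 := by
  rw [atLeastTwoMass, prod_eq_one fun i hi => by simp [hy i hi],
    sum_eq_zero fun i hi => by simp [hy i hi]]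
  ring

/-- the differentiation argument: with
`g(y) = y₁(1 - ∏_{i=2}^N (1 - yᵢ/y₁)) - ∑_{i=2}^N yᵢ ∏_{j≠i} (1 - yⱼ/y₁)`,
`∂g/∂x_k = ∑_{i≠k} (xᵢ/x₁) ∏_{j≠i,k} (1 - xⱼ/x₁) ≥ 0`, `g` vanishes when
`x₂ = ... = x_N = 0`, and hence `g ≥ 0`. -/
theorem stmt17 (N : ℕ) (hN : 3 ≤ N) (x : ℕ → ℝ)
    (hsort : ∀ i j, 1 ≤ i → i ≤ j → j ≤ N → x j ≤ x i)
    (hpos : ∀ i, 1 ≤ i → i ≤ N → 0 < x i) :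
    let g : (ℕ → ℝ) → ℝ := fun y =>
      y 1 * (1 - ∏ i ∈ Finset.Icc 2 N, (1 - y i / y 1)) -
        ∑ i ∈ Finset.Icc 2 N, y i * ∏ j ∈ (Finset.Icc 2 N).erase i, (1 - y j / y 1)
    (∀ k ∈ Finset.Icc 2 N,
      HasDerivAt (fun t => g (Function.update x k t))
        (∑ i ∈ (Finset.Icc 2 N).erase k,
          (x i / x 1) * ∏ j ∈ ((Finset.Icc 2 N).erase i).erase k, (1 - x j / x 1))
        (x k) ∧
      0 ≤ ∑ i ∈ (Finset.Icc 2 N).erase k,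
          (x i / x 1) * ∏ j ∈ ((Finset.Icc 2 N).erase i).erase k, (1 - x j / x 1)) ∧
    (∀ y : ℕ → ℝ, y 1 = x 1 → (∀ i ∈ Finset.Icc 2 N, y i = 0) → g y = 0) ∧
    0 ≤ g x := by
  intro g
  have hx₁ : 0 < x 1 := hpos 1 le_rfl (by omega)
  have h₀ : ∀ i ∈ Icc 2 N, 0 ≤ x i / x 1 := fun i hi =>
    div_nonneg (hpos i (by grind) (mem_Icc.1 hi).2).le hx₁.le
  have h₁ : ∀ i ∈ Icc 2 N, x i / x 1 ≤ 1 := fun i hi =>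
    (div_le_one hx₁).2 (hsort 1 i le_rfl (by grind) (mem_Icc.1 hi).2)
  refine ⟨fun k hk => ⟨?_, atLeastTwoMassSlope_nonneg _ x h₀ h₁ k⟩,
    fun y _ hy => atLeastTwoMass_eq_zero _ _ hy, atLeastTwoMass_nonneg _ x h₀ h₁ hx₁⟩
  have hk₁ : (1 : ℕ) ≠ k := by grind
  have hg : (fun t => g (update x k t))
      = fun t => atLeastTwoMass (Icc 2 N) (x 1) (update x k t) :=
    funext fun t => by simp only [g, atLeastTwoMass, update_of_ne hk₁]
  rw [hg]
  exact hasDerivAt_atLeastTwoMass_update _ hx₁.ne' x hk (x k)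
end

section
/- Let x_1 > x_l for all l ≥ 2 with x_i > 0 and ∑_{i=1}^N x_i = 1 (N ≥ 3). Consider the recursively defined protocol success probability: for N = 2 parties with components (x_1, x_2), the success probability is 2x_2; for N parties, party 2 succeeds in equalizing with probability q = x_2/x_1 yielding success contribution 2x_2·(first-round factor), and otherwise the protocol recurses on the (N-1)-party state with components z_i = x_i(x_1-x_2)/(x_1(1-q)). Then the total success probability equals 2η(x) = 2(x_1 - (1/x_1)^{N-2}∏_{i=2}^N(x_1 - x_i)). -/
/-
Since `x₁ (1 - x₂/x₁) = x₁ - x₂`, the renormalised components `zᵢ` of the recursion are just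
`xᵢ` with party 2 removed. Hence the success probability satisfies
`P_N(x) = 2x₂ + (1 - x₂/x₁) P_{N-1}(x without x₂)`, and the closed form follows by induction,
since removing `x₂` from `∏_{i ≥ 2} (x₁ - xᵢ)` divides it by `x₁ - x₂ = x₁ (1 - x₂/x₁)`.
If `x₂ = x₁` the renormalisation divides by zero, but then the recursive term and the product
both vanish and both sides equal `2x₁`.
-/

/-- The success probability of the recursive "equal or vanish" combing protocol:
for two parties it is `2 x₂`; for `N` parties, party 2 equalizes with probability
`q = x₂/x₁` (total success contribution `2 x₂`), and otherwise the protocol recurses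
on the `(N-1)`-party state with components `zᵢ = xᵢ(x₁-x₂)/(x₁(1-q))` (reindexed so
that the old party `j+1` becomes party `j`). -/
noncomputable def combProb : ℕ → (ℕ → ℝ) → ℝ
  | 0, _ => 0
  | 1, _ => 0
  | 2, x => 2 * x 2
  | N + 3, x =>
      2 * x 2 + (1 - x 2 / x 1) *
        combProb (N + 2) (fun j =>
          (if j = 1 then x 1 else x (j + 1)) * (x 1 - x 2) / (x 1 * (1 - x 2 / x 1)))

open Finset

def eraseSecond (x : ℕ → ℝ) : ℕ → ℝ := fun j => if j = 1 then x 1 else x (j + 1)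

@[simp]
lemma eraseSecond_one (x : ℕ → ℝ) : eraseSecond x 1 = x 1 := if_pos rfl

lemma combProb_add_three {N : ℕ} {x : ℕ → ℝ} (hx₁ : x 1 ≠ 0) (hx₂ : x 2 ≠ x 1) :
    combProb (N + 3) x = 2 * x 2 + (1 - x 2 / x 1) * combProb (N + 2) (eraseSecond x) := by
  have hden : x 1 * (1 - x 2 / x 1) = x 1 - x 2 := by field_simp
  have hrenorm : (fun j => (if j = 1 then x 1 else x (j + 1)) * (x 1 - x 2) /
      (x 1 * (1 - x 2 / x 1))) = eraseSecond x := by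
    funext j
    rw [hden, mul_div_assoc, div_self (sub_ne_zero.mpr hx₂.symm), mul_one, eraseSecond]
  rw [combProb, hrenorm]

lemma combProb_add_three_of_eq {N : ℕ} {x : ℕ → ℝ} (hx₁ : x 1 ≠ 0) (hx₂ : x 2 = x 1) :
    combProb (N + 3) x = 2 * x 2 := by
  rw [combProb, hx₂, div_self hx₁, sub_self, zero_mul, add_zero]

lemma prod_Icc_sub_eraseSecond (a : ℝ) (x : ℕ → ℝ) (N : ℕ) :
    ∏ i ∈ Icc 2 (N + 2), (a - eraseSecond x i) = ∏ i ∈ Icc 3 (N + 3), (a - x i) := by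
  rw [← map_add_right_Icc 2 (N + 2) 1, prod_map]
  refine prod_congr rfl fun i hi => ?_
  have : i ≠ 1 := by rw [mem_Icc] at hi; omega
  simp [eraseSecond, this]

lemma prod_Icc_eq_mul_prod_Icc_add_one {M : Type*} [CommMonoid M] (f : ℕ → M) {a b : ℕ}
    (h : a ≤ b) : ∏ i ∈ Icc a b, f i = f a * ∏ i ∈ Icc (a + 1) b, f i := by
  rw [← mul_prod_Ioc_eq_prod_Icc h, Icc_add_one_left_eq_Ioc]

theorem combProb_add_two (N : ℕ) (x : ℕ → ℝ) (hx₁ : x 1 ≠ 0) :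
    combProb (N + 2) x = 2 * (x 1 - (1 / x 1) ^ N * ∏ i ∈ Icc 2 (N + 2), (x 1 - x i)) := by
  induction N generalizing x with
  | zero => simp [combProb]
  | succ N ih =>
    rw [prod_Icc_eq_mul_prod_Icc_add_one _ (by omega : 2 ≤ N + 3)]
    by_cases hx₂ : x 2 = x 1
    · rw [combProb_add_three_of_eq hx₁ hx₂, hx₂, sub_self]
      ring
    · have ih' := ih (eraseSecond x) (by rwa [eraseSecond_one])
      rw [eraseSecond_one, prod_Icc_sub_eraseSecond] at ih'
      rw [combProb_add_three hx₁ hx₂, ih', one_div_pow, one_div_pow]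
      field_simp
      ring

theorem stmt18_general (N : ℕ) (hN : 3 ≤ N) (x : ℕ → ℝ)
    (hpos : ∀ i, 1 ≤ i → i ≤ N → 0 < x i) :
    combProb N x =
      2 * (x 1 - (1 / x 1) ^ (N - 2) * ∏ i ∈ Finset.Icc 2 N, (x 1 - x i)) := by
  obtain ⟨M, rfl⟩ := Nat.exists_eq_add_of_le' (by omega : 2 ≤ N)
  rw [Nat.add_sub_cancel]
  exact combProb_add_two M x (hpos 1 le_rfl (by omega)).ne'

/-- the "equal or vanish" protocol succeeds with total probability
`2η(x) = 2(x₁ - (1/x₁)^(N-2) ∏_{i=2}^N (x₁ - xᵢ))`. -/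
theorem stmt18 (N : ℕ) (hN : 3 ≤ N) (x : ℕ → ℝ)
    (hpos : ∀ i, 1 ≤ i → i ≤ N → 0 < x i)
    (hmax : ∀ l, 2 ≤ l → l ≤ N → x l < x 1)
    (hsum : ∑ i ∈ Finset.Icc 1 N, x i = 1) :
    combProb N x =
      2 * (x 1 - (1 / x 1) ^ (N - 2) * ∏ i ∈ Finset.Icc 2 N, (x 1 - x i)) :=
  stmt18_general N hN x hpos
end
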